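/- Let G₁ be a finite connected graph that is not complete and let G₂ be a finite disconnected graph with at least one isolated vertex (|V₀(G₂)| ≥ 1). If G₁ is super connected, then the lexicographic product G₁∘G₂ is super connected. -/

import Mathlib

/-- The lexicographic product of two simple graphs: `(x₁,y₁)` is adjacent to `(x₂,y₂)`
iff `x₁x₂` is an edge of `G`, or `x₁ = x₂` and `y₁y₂` is an edge of `H`. -/
def lexProd {V W : Type*} (G : SimpleGraph V) (H : SimpleGraph W) :
    SimpleGraph (V × W) where
  Adj p q := G.Adj p.1 q.1 ∨ (p.1 = q.1 ∧ H.Adj p.2 q.2)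
  symm := ⟨by
    rintro ⟨x₁, y₁⟩ ⟨x₂, y₂⟩ (h | ⟨rfl, h⟩)
    · exact Or.inl h.symm
    · exact Or.inr ⟨rfl, h.symm⟩⟩
  loopless := ⟨by
    rintro ⟨x, y⟩ (h | ⟨-, h⟩)
    · exact G.irrefl h
    · exact H.irrefl h⟩

/-- The set `V₀(G)` of isolated vertices of `G`. -/
def isoSet {V : Type*} (G : SimpleGraph V) : Set V := {v | ∀ w, ¬ G.Adj v w}

/-- The set of vertices of `G − S` that are isolated in `G − S`,
i.e. `V₀(G − S)` regarded as a subset of the vertices of `G`. -/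
def isolatedAfter {V : Type*} (G : SimpleGraph V) (S : Set V) : Set V :=
  {v | v ∉ S ∧ ∀ w ∉ S, ¬ G.Adj v w}

/-- `S` is a vertex-cut of `G`: deleting `S` leaves a disconnected graph, or reduces `G`
to the trivial one-vertex graph `K₁`. -/
def IsVertexCut {V : Type*} (G : SimpleGraph V) (S : Set V) : Prop :=
  (Sᶜ.Nonempty ∧ ¬ (G.induce Sᶜ).Connected) ∨ (∃ v, Sᶜ = {v})

/-- The connectivity `κ(G)`: the minimum cardinality of a vertex-cut of `G`. -/
noncomputable def graphConnectivity {V : Type*} (G : SimpleGraph V) : ℕ :=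
  sInf {n | ∃ S : Set V, IsVertexCut G S ∧ S.ncard = n}

/-- A minimum vertex-cut: a vertex-cut of cardinality `κ(G)`. -/
def IsMinVertexCut {V : Type*} (G : SimpleGraph V) (S : Set V) : Prop :=
  IsVertexCut G S ∧ S.ncard = graphConnectivity G

/-- A k₁-vertex-cut: a vertex-cut `S` such that `G − S` has no isolated vertices. -/
def IsK1VertexCut {V : Type*} (G : SimpleGraph V) (S : Set V) : Prop :=
  IsVertexCut G S ∧ ∀ v ∉ S, ∃ w ∉ S, G.Adj v w

/-- The k₁-connectivity `k₁(G)`, valued in `ℕ∞`; it is `⊤` (infinity) if `G`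
has no k₁-vertex-cut. -/
noncomputable def k1Connectivity {V : Type*} (G : SimpleGraph V) : ℕ∞ :=
  sInf {n : ℕ∞ | ∃ S : Set V, IsK1VertexCut G S ∧ (S.ncard : ℕ∞) = n}

/-- `G` is super connected if every minimum vertex-cut isolates a vertex,
i.e. some vertex of `G − S` has no neighbours in `G − S`. -/
def SuperConnected {V : Type*} (G : SimpleGraph V) : Prop :=
  ∀ S : Set V, IsMinVertexCut G S → ∃ v ∉ S, ∀ w ∉ S, ¬ G.Adj v w

/-! If `B₁` is a minimum vertex-cut of `G₁`, then `B₁ × W` disconnects `G₁ ∘ G₂`, so a minimum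
vertex-cut `S` of the product has at most `κ(G₁)` full columns `{x} × W`; call their set `B`.
A vertex of `G₁ ∘ G₂` sees every vertex of each column over a neighbour of its first coordinate,
so if `G₁ − B` were connected with at least two vertices, `G₁ ∘ G₂ − S` would be connected.
Non-completeness of `G₁` rules out `|V − B| = 1`, hence `B` is a minimum vertex-cut of `G₁`,
`S = B × W` by counting, and a vertex `x` isolated in `G₁ − B` together with an isolated vertex
`y` of `G₂` gives the isolated vertex `(x, y)` of `G₁ ∘ G₂ − S`. -/

open SimpleGraph Set

theorem SimpleGraph.Reachable.lift {V V' : Type*} {G : SimpleGraph V} {G' : SimpleGraph V'}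
    (f : V → V') (hf : ∀ u v, G.Adj u v → G'.Reachable (f u) (f v)) {u v : V}
    (h : G.Reachable u v) : G'.Reachable (f u) (f v) := by
  rw [reachable_iff_reflTransGen] at h ⊢
  exact Relation.ReflTransGen.lift' f
    (fun a b hab => (reachable_iff_reflTransGen _ _).1 (hf a b hab)) _ _ h

section VertexCut

variable {V : Type*} {G : SimpleGraph V} {S : Set V}

theorem IsVertexCut.graphConnectivity_le (hS : IsVertexCut G S) : graphConnectivity G ≤ S.ncard :=
  Nat.sInf_le ⟨S, hS, rfl⟩

theorem IsVertexCut.exists_isMinVertexCut (hS : IsVertexCut G S) : ∃ T, IsMinVertexCut G T :=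
  Nat.sInf_mem (s := {n | ∃ S, IsVertexCut G S ∧ S.ncard = n}) ⟨_, S, hS, rfl⟩

theorem isVertexCut_compl_pair {a b : V} (hab : a ≠ b) (hnadj : ¬ G.Adj a b) :
    IsVertexCut G {a, b}ᶜ := by
  refine Or.inl ⟨by simp, fun hc => ?_⟩
  rw [compl_compl] at hc
  obtain ⟨p⟩ := hc.preconnected ⟨a, by simp⟩ ⟨b, by simp⟩
  have hadj : G.Adj a p.snd := p.adj_snd (p.not_nil_of_ne (by simpa using hab))
  rcases p.snd.2 with h | h <;> rw [h] at hadj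
  exacts [G.irrefl hadj, hnadj hadj]

theorem graphConnectivity_le_card_sub_two [Finite V] (hG : G ≠ ⊤) :
    graphConnectivity G ≤ Nat.card V - 2 := by
  obtain ⟨a, b, hab, hnadj⟩ := ne_top_iff_exists_not_adj.1 hG
  refine (isVertexCut_compl_pair hab hnadj).graphConnectivity_le.trans_eq ?_
  rw [ncard_compl, ncard_pair hab]

theorem compl_nontrivial_of_ncard_le_graphConnectivity [Finite V] (hG : G ≠ ⊤)
    (hS : S.ncard ≤ graphConnectivity G) : Sᶜ.Nontrivial := by
  obtain ⟨a, b, hab, -⟩ := ne_top_iff_exists_not_adj.1 hG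
  have hcard : 1 < Nat.card V := Finite.one_lt_card_iff_nontrivial.2 ⟨a, b, hab⟩
  rw [← one_lt_ncard_iff_nontrivial, ncard_compl]
  have := graphConnectivity_le_card_sub_two hG
  omega

theorem IsMinVertexCut.compl_nontrivial [Finite V] (hG : G ≠ ⊤) (hS : IsMinVertexCut G S) :
    Sᶜ.Nontrivial :=
  compl_nontrivial_of_ncard_le_graphConnectivity hG hS.2.le

theorem IsMinVertexCut.not_connected_induce [Finite V] (hG : G ≠ ⊤) (hS : IsMinVertexCut G S) :
    ¬ (G.induce Sᶜ).Connected := by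
  rcases hS.1 with ⟨-, h⟩ | ⟨v, hv⟩
  · exact h
  · exact absurd (hv ▸ hS.compl_nontrivial hG) not_nontrivial_singleton

end VertexCut

section LexProd

variable {V W : Type*} {G₁ : SimpleGraph V} {G₂ : SimpleGraph W}

theorem lexProd_ne_top [Nonempty W] (hG₁ : G₁ ≠ ⊤) : lexProd G₁ G₂ ≠ ⊤ := by
  obtain ⟨a, b, hab, hnadj⟩ := ne_top_iff_exists_not_adj.1 hG₁
  obtain ⟨y⟩ := ‹Nonempty W›
  refine ne_top_iff_exists_not_adj.2 ⟨(a, y), (b, y), by simpa using hab, ?_⟩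
  rintro (h | ⟨h, -⟩)
  exacts [hnadj h, hab h]

theorem isVertexCut_lexProd_prod_univ [Nonempty W] {B : Set V} (hB : Bᶜ.Nonempty)
    (hdis : ¬ (G₁.induce Bᶜ).Connected) : IsVertexCut (lexProd G₁ G₂) (B ×ˢ univ) := by
  obtain ⟨y⟩ := ‹Nonempty W›
  obtain ⟨x, hx⟩ := hB
  refine Or.inl ⟨⟨(x, y), fun h => hx h.1⟩, fun hc => hdis ?_⟩
  refine (connected_iff _).2 ⟨fun p q => ?_, ⟨x, hx⟩⟩
  have hreach := hc.preconnected ⟨(p, y), fun h => p.2 h.1⟩ ⟨(q, y), fun h => q.2 h.1⟩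
  refine hreach.lift (fun r => (⟨r.1.1, fun h => r.2 ⟨h, trivial⟩⟩ : ↥Bᶜ)) ?_
  rintro r s (h | ⟨h, -⟩)
  · exact Adj.reachable (G := G₁.induce Bᶜ) h
  · exact (Subtype.ext h : (⟨r.1.1, _⟩ : ↥Bᶜ) = ⟨s.1.1, _⟩) ▸ Reachable.rfl

theorem graphConnectivity_lexProd_le [Finite V] [Finite W] [Nonempty W] (hG₁ : G₁ ≠ ⊤) :
    graphConnectivity (lexProd G₁ G₂) ≤ graphConnectivity G₁ * Nat.card W := by
  obtain ⟨a, b, hab, hnadj⟩ := ne_top_iff_exists_not_adj.1 hG₁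
  obtain ⟨B, hB⟩ := (isVertexCut_compl_pair hab hnadj).exists_isMinVertexCut
  have hcut := isVertexCut_lexProd_prod_univ (G₂ := G₂) (hB.compl_nontrivial hG₁).nonempty
    (hB.not_connected_induce hG₁)
  simpa [hB.2] using hcut.graphConnectivity_le

def fullColumns (S : Set (V × W)) : Set V := {x | ∀ y, (x, y) ∈ S}

theorem fullColumns_prod_univ_subset (S : Set (V × W)) : fullColumns S ×ˢ univ ⊆ S :=
  fun p hp => hp.1 p.2

theorem connected_induce_lexProd_compl_of_fullColumns {S : Set (V × W)}
    (hc : (G₁.induce (fullColumns S)ᶜ).Connected) (hnt : (fullColumns S)ᶜ.Nontrivial) :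
    ((lexProd G₁ G₂).induce Sᶜ).Connected := by
  have : ∀ x : ↥(fullColumns S)ᶜ, ∃ y, (x.1, y) ∉ S := fun x => not_forall.1 x.2
  choose g hg using this
  let f : ↥(fullColumns S)ᶜ → ↥Sᶜ := fun x => ⟨(x.1, g x), hg x⟩
  have hf : ∀ x x', ((lexProd G₁ G₂).induce Sᶜ).Reachable (f x) (f x') := fun x x' =>
    (hc.preconnected x x').lift f fun _ _ h => Adj.reachable (Or.inl h)
  have hnear : ∀ p : ↥Sᶜ, ∃ x, ((lexProd G₁ G₂).induce Sᶜ).Adj p (f x) := by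
    rintro ⟨p, hp⟩
    have : Nontrivial ↥(fullColumns S)ᶜ := hnt.coe_sort
    obtain ⟨x, hx⟩ := hc.preconnected.exists_adj_of_nontrivial ⟨p.1, fun h => hp (h p.2)⟩
    exact ⟨x, Or.inl hx⟩
  obtain ⟨x, hx⟩ := hnt.nonempty
  refine (connected_iff _).2 ⟨fun p q => ?_, ⟨f ⟨x, hx⟩⟩⟩
  obtain ⟨x, hpx⟩ := hnear p
  obtain ⟨x', hqx'⟩ := hnear q
  exact hpx.reachable.trans ((hf x x').trans hqx'.reachable.symm)

theorem IsMinVertexCut.exists_eq_prod_univ [Finite V] [Finite W] [Nonempty W] (hG₁ : G₁ ≠ ⊤)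
    {S : Set (V × W)} (hS : IsMinVertexCut (lexProd G₁ G₂) S) :
    ∃ B, IsMinVertexCut G₁ B ∧ S = B ×ˢ univ := by
  set B := fullColumns S
  have hW : 0 < Nat.card W := Nat.card_pos
  have hSle : S.ncard ≤ graphConnectivity G₁ * Nat.card W :=
    hS.2 ▸ graphConnectivity_lexProd_le hG₁
  have hBS : B.ncard * Nat.card W ≤ S.ncard := by
    simpa using ncard_le_ncard (fullColumns_prod_univ_subset S)
  have hBle : B.ncard ≤ graphConnectivity G₁ :=
    Nat.le_of_mul_le_mul_right (hBS.trans hSle) hW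
  have hnt : Bᶜ.Nontrivial := compl_nontrivial_of_ncard_le_graphConnectivity hG₁ hBle
  have hcut : IsVertexCut G₁ B := Or.inl ⟨hnt.nonempty, fun hc => hS.not_connected_induce
    (lexProd_ne_top hG₁) (connected_induce_lexProd_compl_of_fullColumns hc hnt)⟩
  have hB : B.ncard = graphConnectivity G₁ := le_antisymm hBle hcut.graphConnectivity_le
  refine ⟨B, ⟨hcut, hB⟩, (eq_of_subset_of_ncard_le (fullColumns_prod_univ_subset S) ?_).symm⟩
  rwa [ncard_prod, ncard_univ, hB]

theorem mk_mem_isolatedAfter_lexProd {B : Set V} {x : V} {y : W} (hx : x ∈ isolatedAfter G₁ B)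
    (hy : y ∈ isoSet G₂) : (x, y) ∈ isolatedAfter (lexProd G₁ G₂) (B ×ˢ univ) := by
  refine ⟨fun h => hx.1 h.1, ?_⟩
  rintro ⟨x', y'⟩ h' (h | ⟨-, h⟩)
  exacts [hx.2 x' (fun h'' => h' ⟨h'', trivial⟩) h, hy y' h]

end LexProd

theorem superConnected_lexProd_general {V W : Type*} [Fintype V] [Fintype W]
    (G₁ : SimpleGraph V) (G₂ : SimpleGraph W)
    (hnc : G₁ ≠ ⊤) (hiso : (isoSet G₂).Nonempty)
    (hsup : SuperConnected G₁) :
    SuperConnected (lexProd G₁ G₂) := by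
  obtain ⟨y, hy⟩ := hiso
  have : Nonempty W := ⟨y⟩
  intro S hS
  obtain ⟨B, hB, rfl⟩ := hS.exists_eq_prod_univ hnc
  obtain ⟨x, hx⟩ := hsup B hB
  exact ⟨(x, y), mk_mem_isolatedAfter_lexProd hx hy⟩

/-- If G₁ is connected, non-complete and super connected, and G₂ is disconnected
with at least one isolated vertex, then G₁∘G₂ is super connected. -/
theorem superConnected_lexProd {V W : Type*} [Fintype V] [Fintype W] [Nonempty W]
    (G₁ : SimpleGraph V) (G₂ : SimpleGraph W)
    (hconn : G₁.Connected) (hnc : G₁ ≠ ⊤)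
    (h₂ : ¬ G₂.Connected) (hiso : (isoSet G₂).Nonempty)
    (hsup : SuperConnected G₁) :
    SuperConnected (lexProd G₁ G₂) :=
  superConnected_lexProd_general G₁ G₂ hnc hiso hsup
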